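/- Let E be a complex linear space, M ⊆ E a complex linear subspace, p : E → L⁰₊ a random seminorm (p(αx)=|α|p(x) for α ∈ ℂ, p(x+y) ≤ p(x)+p(y)), and f : M → L⁰(F,ℂ) a complex linear map with |f(x)| ≤ p(x) for all x ∈ M. Then there exists a complex linear map g : E → L⁰(F,ℂ) extending f with |g(x)| ≤ p(x) for all x ∈ E. -/

import Mathlib

open MeasureTheory

variable {Ω : Type*} [MeasurableSpace Ω] {μ : MeasureTheory.Measure Ω}

/-- `L⁰(F,𝕜)`, the space `Ω →ₘ[μ] 𝕜` of equivalence classes of `𝕜`-valued random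
variables, is a commutative ring under the pointwise operations. -/
noncomputable instance L0.instCommRing {𝕜 : Type*} [RCLike 𝕜] : CommRing (Ω →ₘ[μ] 𝕜) :=
  { (inferInstance : AddCommGroup (Ω →ₘ[μ] 𝕜)),
    (inferInstance : CommMonoid (Ω →ₘ[μ] 𝕜)) with
    left_distrib := fun f g h => AEEqFun.toGerm_injective <| by
      simp only [AEEqFun.mul_toGerm, AEEqFun.add_toGerm, mul_add]
    right_distrib := fun f g h => AEEqFun.toGerm_injective <| by
      simp only [AEEqFun.mul_toGerm, AEEqFun.add_toGerm, add_mul]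
    zero_mul := fun f => AEEqFun.toGerm_injective <| by
      simp only [AEEqFun.mul_toGerm, AEEqFun.zero_toGerm, zero_mul]
    mul_zero := fun f => AEEqFun.toGerm_injective <| by
      simp only [AEEqFun.mul_toGerm, AEEqFun.zero_toGerm, mul_zero] }

/-- The pointwise modulus `|ξ|` of an element of `L⁰(F,𝕜)`, as an element of `L⁰(F,ℝ)`. -/
noncomputable def L0.abs {Ω : Type*} [MeasurableSpace Ω] {μ : Measure Ω} {𝕜 : Type*}
    [RCLike 𝕜] (ξ : Ω →ₘ[μ] 𝕜) : Ω →ₘ[μ] ℝ :=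
  AEEqFun.comp (fun z => ‖z‖) continuous_norm ξ

/-!
`L⁰(ℝ)` is Dedekind complete: in a sup-closed family bounded above, pick an increasing sequence
along which `∫ arctan` approaches its supremum; the pointwise supremum of that sequence is the
least upper bound, because `∫ arctan` is strictly monotone and continuous along a.e. limits.
With this, the usual Zorn argument with one-dimensional extensions proves Hahn–Banach for a
sublinear `p` with values in `L⁰(ℝ)`. For the complex case, extend `Re f` to a real-linear `h`
and put `g x = h x - i h (i x)`. Then `Re (c g x) = h (c x) ≤ p x` for every unimodular `c`,
and the countably many `c = exp (i q)`, `q ∈ ℚ`, already bound `|g x|` almost surely.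
-/

open Filter Topology Set

lemma Real.norm_arctan_le (x : ℝ) : ‖Real.arctan x‖ ≤ Real.pi / 2 :=
  (abs_lt.2 ⟨Real.neg_pi_div_two_lt_arctan x, Real.arctan_lt_pi_div_two x⟩).le

lemma MeasureTheory.AEStronglyMeasurable.integrable_arctan [IsFiniteMeasure μ] {f : Ω → ℝ}
    (hf : AEStronglyMeasurable f μ) : Integrable (fun ω => Real.arctan (f ω)) μ :=
  .of_bound (Real.continuous_arctan.comp_aestronglyMeasurable hf) _ <|
    ae_of_all _ fun _ => Real.norm_arctan_le _

namespace MeasureTheory.AEEqFun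

instance instIsOrderedAddMonoid {β : Type*} [TopologicalSpace β] [AddCommMonoid β]
    [ContinuousAdd β] [PartialOrder β] [IsOrderedAddMonoid β] :
    IsOrderedAddMonoid (Ω →ₘ[μ] β) where
  add_le_add_left f g hfg h := by
    induction f using AEEqFun.induction_on
    induction g using AEEqFun.induction_on
    induction h using AEEqFun.induction_on
    simp only [mk_add_mk, mk_le_mk] at hfg ⊢
    filter_upwards [hfg] with ω h using add_le_add_left h _

instance instPosSMulMono {𝕜 β : Type*} [TopologicalSpace β] [Zero 𝕜] [Preorder 𝕜] [Preorder β]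
    [SMul 𝕜 β] [ContinuousConstSMul 𝕜 β] [PosSMulMono 𝕜 β] : PosSMulMono 𝕜 (Ω →ₘ[μ] β) where
  smul_le_smul_of_nonneg_left c hc f g hfg := by
    induction f using AEEqFun.induction_on
    induction g using AEEqFun.induction_on
    simp only [smul_mk, mk_le_mk] at hfg ⊢
    filter_upwards [hfg] with ω h using smul_le_smul_of_nonneg_left h hc

lemma exists_isLUB_range_of_monotone {u : ℕ → Ω →ₘ[μ] ℝ} (hu : Monotone u)
    (hbdd : BddAbove (range u)) :
    ∃ f : Ω →ₘ[μ] ℝ, IsLUB (range u) f ∧ ∀ᵐ ω ∂μ, Tendsto (u · ω) atTop (𝓝 (f ω)) := by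
  obtain ⟨b, hb⟩ := hbdd
  have hpointwise : ∀ᵐ ω ∂μ, Monotone (u · ω) ∧ BddAbove (range (u · ω)) := by
    filter_upwards [ae_all_iff.2 fun n : ℕ => coeFn_le.2 (hu n.le_succ),
      ae_all_iff.2 fun n => coeFn_le.2 (hb (mem_range_self n))] with ω hsucc hle
    exact ⟨monotone_nat_of_le_succ hsucc, b ω, forall_mem_range.2 hle⟩
  have hmeas : Measurable fun ω => ⨆ n, u n ω := .iSup fun n => (u n).measurable
  have hf := coeFn_mk _ hmeas.aestronglyMeasurable (μ := μ)
  refine ⟨mk _ hmeas.aestronglyMeasurable, ⟨forall_mem_range.2 fun n => ?_, fun c hc => ?_⟩, ?_⟩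
  · refine coeFn_le.1 ?_
    filter_upwards [hpointwise, hf] with ω hω hfω
    exact hfω ▸ le_ciSup hω.2 n
  · refine coeFn_le.1 ?_
    filter_upwards [ae_all_iff.2 fun n => coeFn_le.2 (hc (mem_range_self n)), hf] with ω hω hfω
    exact hfω ▸ ciSup_le hω
  · filter_upwards [hpointwise, hf] with ω hω hfω
    exact hfω ▸ tendsto_atTop_ciSup hω.1 hω.2

noncomputable def integralArctan (f : Ω →ₘ[μ] ℝ) : ℝ := ∫ ω, Real.arctan (f ω) ∂μ

variable [IsFiniteMeasure μ]

lemma integralArctan_mono {f g : Ω →ₘ[μ] ℝ} (hfg : f ≤ g) :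
    integralArctan f ≤ integralArctan g :=
  integral_mono_ae f.aestronglyMeasurable.integrable_arctan
    g.aestronglyMeasurable.integrable_arctan
    ((coeFn_le.2 hfg).mono fun _ h => Real.arctan_mono h)

lemma eq_of_le_of_integralArctan_le {f g : Ω →ₘ[μ] ℝ} (hfg : f ≤ g)
    (h : integralArctan g ≤ integralArctan f) : f = g := by
  have hae := (integral_eq_iff_of_ae_le f.aestronglyMeasurable.integrable_arctan
    g.aestronglyMeasurable.integrable_arctan
    ((coeFn_le.2 hfg).mono fun _ h => Real.arctan_mono h)).1
    ((integralArctan_mono hfg).antisymm h)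
  exact ext (hae.mono fun _ h => Real.arctan_injective h)

lemma tendsto_integralArctan {u : ℕ → Ω →ₘ[μ] ℝ} {f : Ω →ₘ[μ] ℝ}
    (h : ∀ᵐ ω ∂μ, Tendsto (fun n => u n ω) atTop (𝓝 (f ω))) :
    Tendsto (fun n => integralArctan (u n)) atTop (𝓝 (integralArctan f)) :=
  tendsto_integral_of_dominated_convergence _
    (fun n => Real.continuous_arctan.comp_aestronglyMeasurable (u n).aestronglyMeasurable)
    (integrable_const (Real.pi / 2)) (fun _ => ae_of_all _ fun _ => Real.norm_arctan_le _)
    (h.mono fun _ h => (Real.continuous_arctan.tendsto _).comp h)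

theorem exists_isLUB {s : Set (Ω →ₘ[μ] ℝ)} (hne : s.Nonempty) (hbdd : BddAbove s) :
    ∃ f, IsLUB s f := by
  set D := supClosure s
  have hD : SupClosed D := supClosed_supClosure
  obtain ⟨b, hb⟩ := hbdd
  rw [← upperBounds_supClosure] at hb
  have hDbdd : BddAbove D := ⟨b, hb⟩
  have hΦbdd : BddAbove (integralArctan '' D) :=
    ⟨integralArctan b, forall_mem_image.2 fun f hf => integralArctan_mono (hb hf)⟩
  obtain ⟨v, -, hlim, hmem⟩ :=
    exists_seq_tendsto_sSup ((hne.mono subset_supClosure).image _) hΦbdd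
  choose a haD ha using hmem
  set u := partialSups a
  have huD (n : ℕ) : u n ∈ D := by
    rw [partialSups_apply]
    exact hD.finsetSup'_mem _ fun i _ => haD i
  obtain ⟨f, hf, hfu⟩ := exists_isLUB_range_of_monotone u.monotone
    (hDbdd.mono (range_subset_iff.2 huD))
  have hΦf : integralArctan f = sSup (integralArctan '' D) := by
    refine tendsto_nhds_unique (tendsto_integralArctan hfu) ?_
    refine tendsto_of_tendsto_of_tendsto_of_le_of_le (hlim.congr fun n => (ha n).symm)
      tendsto_const_nhds (fun n => integralArctan_mono (le_partialSups a n))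
      (fun n => le_csSup hΦbdd (mem_image_of_mem _ (huD n)))
  refine ⟨f, isLUB_supClosure.1 ⟨fun x hx => ?_, fun c hc => hf.2 ?_⟩⟩
  · -- `x ⊔ u n` increases to some `g ≥ f` with `integralArctan g ≤ integralArctan f`, so `g = f`
    obtain ⟨g, hg, hgu⟩ := exists_isLUB_range_of_monotone (u := fun n => x ⊔ u n)
      (monotone_const.sup u.monotone) (hDbdd.mono (range_subset_iff.2 fun n => hD hx (huD n)))
    have hfg : f = g := by
      refine eq_of_le_of_integralArctan_le (hf.2 fun _ ⟨n, hn⟩ => hn ▸ ?_) ?_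
      · exact le_sup_right.trans (hg.1 (mem_range_self n))
      · exact hΦf ▸ le_of_tendsto' (tendsto_integralArctan hgu)
          fun n => le_csSup hΦbdd (mem_image_of_mem _ (hD hx (huD n)))
    exact hfg ▸ le_sup_left.trans (hg.1 (mem_range_self 0))
  · exact forall_mem_range.2 fun n => hc (huD n)

end MeasureTheory.AEEqFun

section HahnBanach

variable {E F : Type*} [AddCommGroup E] [Module ℝ E] [AddCommGroup F] [PartialOrder F]
  [Module ℝ F] {p : E → F}

namespace LinearPMap

lemma add_smul_le_of_forall_add_le [PosSMulMono ℝ F]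
    (hp_smul : ∀ t : ℝ, 0 < t → ∀ x, p (t • x) = t • p x) {f : E →ₗ.[ℝ] F} {y : E} {c : F}
    (h : ∀ x : f.domain, f x + c ≤ p (x + y)) {t : ℝ} (ht : 0 < t) (x : f.domain) :
    f x + t • c ≤ p (x + t • y) := by
  have := smul_le_smul_of_nonneg_left (h (t⁻¹ • x)) ht.le
  rwa [smul_add, f.map_smul, smul_smul, mul_inv_cancel₀ ht.ne', one_smul, ← hp_smul t ht,
    Submodule.coe_smul, smul_add, smul_smul, mul_inv_cancel₀ ht.ne', one_smul] at this

lemma exists_lt_of_le_sublinear [IsOrderedAddMonoid F] [PosSMulMono ℝ F]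
    (hF : ∀ s : Set F, s.Nonempty → BddAbove s → ∃ c, IsLUB s c)
    (hp_smul : ∀ t : ℝ, 0 < t → ∀ x, p (t • x) = t • p x) (hp_add : ∀ x y, p (x + y) ≤ p x + p y)
    {f : E →ₗ.[ℝ] F} (hf : ∀ x : f.domain, f x ≤ p x) (hdom : f.domain ≠ ⊤) :
    ∃ g, f < g ∧ ∀ x : g.domain, g x ≤ p x := by
  obtain ⟨y, -, hy⟩ : ∃ y ∈ ⊤, y ∉ f.domain := SetLike.exists_of_lt (lt_top_iff_ne_top.2 hdom)
  have hbound (x x' : f.domain) : f x - p (x - y) ≤ p (x' + y) - f x' := by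
    rw [sub_le_sub_iff, ← map_add]
    calc f (x + x') ≤ p ((x : E) - y + (x' + y)) := by simpa using hf (x + x')
      _ ≤ p (x' + y) + p (x - y) := (hp_add _ _).trans_eq (add_comm _ _)
  obtain ⟨c, hc⟩ := hF (range fun x : f.domain => f x - p (x - y)) (range_nonempty _)
    ⟨_, forall_mem_range.2 fun x => hbound x 0⟩
  have hpos (x : f.domain) : f x + c ≤ p (x + y) :=
    le_sub_iff_add_le'.1 (hc.2 (forall_mem_range.2 fun x' => hbound x' x))
  have hneg (x : f.domain) : f x + -c ≤ p (x + -y) := by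
    simpa [← sub_eq_add_neg, sub_le_iff_le_add, add_comm] using hc.1 (mem_range_self x)
  refine ⟨f.supSpanSingleton y c hy, ?_, ?_⟩
  · refine lt_iff_le_not_ge.2 ⟨f.left_le_sup _ _, fun H => hy ?_⟩
    replace H := LinearPMap.domain_mono.monotone H
    rw [LinearPMap.domain_supSpanSingleton, sup_le_iff, Submodule.span_le,
      singleton_subset_iff] at H
    exact H.2
  · rintro ⟨z, hz⟩
    obtain ⟨x, hx, w, hw, rfl⟩ := Submodule.mem_sup.1 (f.domain_supSpanSingleton y c hy ▸ hz)
    obtain ⟨t, rfl⟩ := Submodule.mem_span_singleton.1 hw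
    rw [LinearPMap.supSpanSingleton_apply_mk _ _ _ _ _ hx]
    rcases lt_trichotomy t 0 with ht | rfl | ht
    · simpa using add_smul_le_of_forall_add_le hp_smul hneg (neg_pos.2 ht) ⟨x, hx⟩
    · simpa using hf ⟨x, hx⟩
    · exact add_smul_le_of_forall_add_le hp_smul hpos ht ⟨x, hx⟩

lemma sSup_apply_le {c : Set (E →ₗ.[ℝ] F)} (hne : c.Nonempty) (hc : DirectedOn (· ≤ ·) c)
    (hcp : ∀ f ∈ c, ∀ x : f.domain, f x ≤ p x) (x : (LinearPMap.sSup c hc).domain) :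
    LinearPMap.sSup c hc x ≤ p x := by
  obtain ⟨x, hx⟩ := x
  have hdir : DirectedOn (· ≤ ·) (LinearPMap.domain '' c) :=
    directedOn_image.2 (hc.mono LinearPMap.domain_mono.monotone)
  obtain ⟨_, ⟨f, hfc, rfl⟩, hfx⟩ :=
    (Submodule.mem_sSup_of_directed (hne.image _) hdir).1 hx
  have hfx' : f ⟨x, hfx⟩ = LinearPMap.sSup c hc ⟨x, hx⟩ := (LinearPMap.le_sSup hc hfc).2 rfl
  exact hfx' ▸ hcp f hfc ⟨x, hfx⟩

end LinearPMap

theorem exists_extension_of_le_sublinear_of_exists_isLUB [IsOrderedAddMonoid F] [PosSMulMono ℝ F]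
    (hF : ∀ s : Set F, s.Nonempty → BddAbove s → ∃ c, IsLUB s c)
    (hp_smul : ∀ t : ℝ, 0 < t → ∀ x, p (t • x) = t • p x) (hp_add : ∀ x y, p (x + y) ≤ p x + p y)
    (f : E →ₗ.[ℝ] F) (hf : ∀ x : f.domain, f x ≤ p x) :
    ∃ g : E →ₗ[ℝ] F, (∀ x : f.domain, g x = f x) ∧ ∀ x, g x ≤ p x := by
  obtain ⟨⟨g_dom, g⟩, hfg, hg, hmax⟩ :=
    zorn_le_nonempty₀ {g : E →ₗ.[ℝ] F | ∀ x : g.domain, g x ≤ p x}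
    (fun c hcS hc g hg => ⟨_, LinearPMap.sSup_apply_le ⟨g, hg⟩ hc.directedOn hcS,
      fun _ => LinearPMap.le_sSup hc.directedOn⟩) f hf
  obtain rfl : g_dom = ⊤ := by
    by_contra hdom
    obtain ⟨g', hgg', hg'⟩ := LinearPMap.exists_lt_of_le_sublinear hF hp_smul hp_add hg hdom
    exact hgg'.not_ge (hmax hg' hgg'.le)
  exact ⟨g.comp (LinearMap.id.codRestrict ⊤ fun _ => trivial), fun x => (hfg.2 rfl).symm,
    fun x => hg ⟨x, trivial⟩⟩

end HahnBanach

namespace ContinuousLinearMap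

variable {R β γ : Type*} [Semiring R] [TopologicalSpace β] [AddCommMonoid β] [ContinuousAdd β]
  [Module R β] [ContinuousConstSMul R β] [TopologicalSpace γ] [AddCommMonoid γ] [ContinuousAdd γ]
  [Module R γ] [ContinuousConstSMul R γ]

noncomputable def compAEEqFun (L : β →L[R] γ) : (Ω →ₘ[μ] β) →ₗ[R] Ω →ₘ[μ] γ where
  toFun f := f.comp L L.continuous
  map_add' f g := by
    induction f, g using AEEqFun.induction_on₂
    exact AEEqFun.mk_eq_mk.2 (ae_of_all _ fun _ => map_add L _ _)
  map_smul' c f := by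
    induction f using AEEqFun.induction_on
    exact AEEqFun.mk_eq_mk.2 (ae_of_all _ fun _ => map_smul L _ _)

lemma coeFn_compAEEqFun (L : β →L[R] γ) (f : Ω →ₘ[μ] β) :
    L.compAEEqFun f =ᵐ[μ] fun ω => L (f ω) :=
  AEEqFun.coeFn_comp _ L.continuous _

lemma compAEEqFun_mk (L : β →L[R] γ) (f : Ω → β) (hf : AEStronglyMeasurable f μ) :
    L.compAEEqFun (AEEqFun.mk f hf) =
      AEEqFun.mk (fun ω => L (f ω)) (L.continuous.comp_aestronglyMeasurable hf) :=
  AEEqFun.comp_mk _ L.continuous _ _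

end ContinuousLinearMap

lemma Complex.smul_eq_re_smul_add_im_smul_I_smul {W : Type*} [AddCommGroup W] [Module ℂ W]
    [Module ℝ W] [IsScalarTower ℝ ℂ W] (a : ℂ) (w : W) :
    a • w = a.re • w + a.im • Complex.I • w := by
  rw [← smul_one_smul ℂ a.re, ← smul_one_smul ℂ a.im, smul_smul, ← add_smul]
  simp [Complex.re_add_im]

namespace LinearMap

variable {E V : Type*} [AddCommGroup E] [Module ℂ E] [Module ℝ E] [IsScalarTower ℝ ℂ E]
  [AddCommGroup V] [Module ℂ V] [Module ℝ V] [IsScalarTower ℝ ℂ V]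

def toComplexLinear (φ : E →ₗ[ℝ] V) (hφ : ∀ x, φ (Complex.I • x) = Complex.I • φ x) :
    E →ₗ[ℂ] V where
  toFun := φ
  map_add' := φ.map_add
  map_smul' a x := by
    rw [RingHom.id_apply, Complex.smul_eq_re_smul_add_im_smul_I_smul a x,
      Complex.smul_eq_re_smul_add_im_smul_I_smul a (φ x), map_add, map_smul, map_smul, hφ]

end LinearMap

lemma Complex.norm_le_of_forall_re_exp_rat_mul_I_mul_le {z : ℂ} {C : ℝ}
    (h : ∀ q : ℚ, (Complex.exp ((q : ℝ) * Complex.I) * z).re ≤ C) : ‖z‖ ≤ C := by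
  have hθ : (Complex.exp (↑(-z.arg) * Complex.I) * z).re ≤ C :=
    Rat.denseRange_cast.induction_on (-z.arg) (isClosed_le (by fun_prop) continuous_const) h
  have hz : Complex.exp (↑(-z.arg) * Complex.I) * z = ‖z‖ := by
    conv_lhs => rw [← Complex.norm_mul_exp_arg_mul_I z]
    rw [mul_left_comm, ← Complex.exp_add]
    simp
  rwa [hz, Complex.ofReal_re] at hθ

namespace L0

noncomputable abbrev re : (Ω →ₘ[μ] ℂ) →ₗ[ℝ] Ω →ₘ[μ] ℝ := Complex.reCLM.compAEEqFun

noncomputable abbrev ofReal : (Ω →ₘ[μ] ℝ) →ₗ[ℝ] Ω →ₘ[μ] ℂ := Complex.ofRealCLM.compAEEqFun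

lemma coeFn_abs (ξ : Ω →ₘ[μ] ℂ) : L0.abs ξ =ᵐ[μ] fun ω => ‖ξ ω‖ :=
  AEEqFun.coeFn_comp _ _ _

lemma re_le_abs (ξ : Ω →ₘ[μ] ℂ) : re ξ ≤ L0.abs ξ := by
  refine AEEqFun.coeFn_le.1 ?_
  filter_upwards [Complex.reCLM.coeFn_compAEEqFun ξ, coeFn_abs ξ] with ω hre habs
  exact hre ▸ habs ▸ Complex.re_le_norm _

lemma abs_le_of_forall_re_smul_le {ξ : Ω →ₘ[μ] ℂ} {P : Ω →ₘ[μ] ℝ}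
    (h : ∀ c : ℂ, ‖c‖ = 1 → re (c • ξ) ≤ P) : L0.abs ξ ≤ P := by
  have hq (q : ℚ) : ∀ᵐ ω ∂μ, (Complex.exp ((q : ℝ) * Complex.I) * ξ ω).re ≤ P ω := by
    let c := Complex.exp ((q : ℝ) * Complex.I)
    filter_upwards [AEEqFun.coeFn_le.2 (h c (Complex.norm_exp_ofReal_mul_I _)),
      Complex.reCLM.coeFn_compAEEqFun (c • ξ), AEEqFun.coeFn_smul c ξ] with ω hle hre hsmul
    rwa [hre, hsmul, Pi.smul_apply, Complex.reCLM_apply, smul_eq_mul] at hle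
  refine AEEqFun.coeFn_le.1 ?_
  filter_upwards [ae_all_iff.2 hq, coeFn_abs ξ] with ω hω habs
  exact habs ▸ Complex.norm_le_of_forall_re_exp_rat_mul_I_mul_le hω

lemma re_ofReal_sub_I_smul_ofReal (a b : Ω →ₘ[μ] ℝ) :
    re (ofReal a - Complex.I • ofReal b) = a := by
  induction a, b using AEEqFun.induction_on₂
  simp only [ContinuousLinearMap.compAEEqFun_mk, AEEqFun.smul_mk, ← AEEqFun.mk_sub]
  exact AEEqFun.mk_eq_mk.2 (ae_of_all _ fun ω => by simp)

lemma ofReal_re_sub_I_smul_ofReal_re_I_smul (ξ : Ω →ₘ[μ] ℂ) :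
    ofReal (re ξ) - Complex.I • ofReal (re (Complex.I • ξ)) = ξ := by
  induction ξ using AEEqFun.induction_on
  simp only [ContinuousLinearMap.compAEEqFun_mk, AEEqFun.smul_mk, ← AEEqFun.mk_sub]
  exact AEEqFun.mk_eq_mk.2 (ae_of_all _ fun ω => by simp [mul_comm Complex.I, Complex.re_add_im])

variable {E : Type*} [AddCommGroup E] [Module ℂ E]

noncomputable def complexify (h : E →ₗ[ℝ] Ω →ₘ[μ] ℝ) : E →ₗ[ℂ] Ω →ₘ[μ] ℂ :=
  LinearMap.toComplexLinear
    { toFun x := ofReal (h x) - Complex.I • ofReal (h (Complex.I • x))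
      map_add' x y := by
        simp only [smul_add, map_add]
        abel
      map_smul' t x := by
        simp only [smul_comm _ t, map_smul, smul_sub, RingHom.id_apply] }
    fun x => by
      have hII : Complex.I • Complex.I • x = -x := by
        rw [smul_smul, Complex.I_mul_I, neg_one_smul]
      have hIIv (v : Ω →ₘ[μ] ℂ) : Complex.I • Complex.I • v = -v := by
        rw [smul_smul, Complex.I_mul_I]
        -- `rw [neg_one_smul]` does not find the pattern in the `AEEqFun` scalar action
        exact neg_one_smul ℂ v
      simp only [LinearMap.coe_mk, AddHom.coe_mk, hII, map_neg, smul_sub, smul_neg, hIIv]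
      abel

lemma re_complexify (h : E →ₗ[ℝ] Ω →ₘ[μ] ℝ) (x : E) : re (complexify h x) = h x :=
  re_ofReal_sub_I_smul_ofReal _ _

lemma complexify_apply_eq_of_re {h : E →ₗ[ℝ] Ω →ₘ[μ] ℝ} {x : E} {ξ : Ω →ₘ[μ] ℂ}
    (hx : h x = re ξ) (hIx : h (Complex.I • x) = re (Complex.I • ξ)) : complexify h x = ξ := by
  change ofReal (h x) - Complex.I • ofReal (h (Complex.I • x)) = ξ
  rw [hx, hIx, ofReal_re_sub_I_smul_ofReal_re_I_smul]

end L0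

theorem random_hahn_banach_complex_general {Ω : Type*} [MeasurableSpace Ω] (μ : Measure Ω)
    [IsProbabilityMeasure μ] (E : Type*) [AddCommGroup E] [Module ℂ E]
    (M : Submodule ℂ E) (p : E → Ω →ₘ[μ] ℝ)
    (hp_smul : ∀ (a : ℂ) (x : E), p (a • x) = ‖a‖ • p x)
    (hp_add : ∀ x y : E, p (x + y) ≤ p x + p y)
    (f : M →ₗ[ℂ] Ω →ₘ[μ] ℂ)
    (hfp : ∀ m : M, L0.abs (f m) ≤ p (m : E)) :
    ∃ g : E →ₗ[ℂ] Ω →ₘ[μ] ℂ,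
      (∀ m : M, g (m : E) = f m) ∧ ∀ x : E, L0.abs (g x) ≤ p x := by
  have hp_smul_real (t : ℝ) (ht : 0 < t) (x : E) : p (t • x) = t • p x := by
    rw [← Complex.coe_smul, hp_smul, Complex.norm_real, Real.norm_of_nonneg ht.le]
  obtain ⟨h, hh_ext, hh_le⟩ := exists_extension_of_le_sublinear_of_exists_isLUB
    (fun _ hne hbdd => AEEqFun.exists_isLUB hne hbdd) hp_smul_real hp_add
    ⟨M.restrictScalars ℝ, L0.re ∘ₗ f.restrictScalars ℝ⟩ fun m => (L0.re_le_abs _).trans (hfp m)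
  refine ⟨L0.complexify h, fun m => L0.complexify_apply_eq_of_re (hh_ext ⟨m, m.2⟩) ?_,
    fun x => L0.abs_le_of_forall_re_smul_le fun c hc => ?_⟩
  · rw [← map_smul]
    exact hh_ext ⟨_, (Complex.I • m).2⟩
  · calc L0.re (c • L0.complexify h x) = h (c • x) := by rw [← map_smul, L0.re_complexify]
      _ ≤ p (c • x) := hh_le _
      _ = p x := by rw [hp_smul, hc, one_smul]

/-- **Theorem 2.2 (Hahn–Banach for random linear functionals, complex case).** Let `E` be a
complex linear space, `M ⊆ E` a complex subspace, `p : E → L⁰₊` a random seminorm and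
`f : M → L⁰(F,ℂ)` a complex linear map with `|f| ≤ p` on `M`. Then `f` extends to a complex
linear map `g : E → L⁰(F,ℂ)` with `|g| ≤ p` on `E`. -/
theorem random_hahn_banach_complex {Ω : Type*} [MeasurableSpace Ω] (μ : Measure Ω)
    [IsProbabilityMeasure μ] (E : Type*) [AddCommGroup E] [Module ℂ E]
    (M : Submodule ℂ E) (p : E → Ω →ₘ[μ] ℝ)
    (hp_nonneg : ∀ x : E, 0 ≤ p x)
    (hp_smul : ∀ (a : ℂ) (x : E), p (a • x) = ‖a‖ • p x)
    (hp_add : ∀ x y : E, p (x + y) ≤ p x + p y)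
    (f : M →ₗ[ℂ] Ω →ₘ[μ] ℂ)
    (hfp : ∀ m : M, L0.abs (f m) ≤ p (m : E)) :
    ∃ g : E →ₗ[ℂ] Ω →ₘ[μ] ℂ,
      (∀ m : M, g (m : E) = f m) ∧ ∀ x : E, L0.abs (g x) ≤ p x :=
  random_hahn_banach_complex_general μ E M p hp_smul hp_add f hfp
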